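/- arXiv:1709.02149 — 3 statements merged into one kernel-verified Lean document; each statement's English description precedes it below -/
import Mathlib

section
/- Let $f_1, f_2, f_3 : S^1 \times [0,T) \to \mathbb{R}_{>0}$ be smooth with $f_1 f_2 f_3 \equiv 1$, each satisfying $\partial_t f_i = \frac{1}{V}\big(\frac{f_i''}{V} - \frac{f_i' V'}{V^2}\big) - \frac{1}{3} f_i \mathcal{T}$ where $V > 0$ is smooth and $\mathcal{T} \geq 0$. Then for each $i$, $\max_{x \in S^1} f_i(x,t)$ is non-increasing in $t$, and consequently there is a constant $C \geq 1$ (depending only on the initial data) such that $\frac{1}{C} \leq f_i \leq C$ on $S^1 \times [0,T)$ for all $i$. -/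
open Real

/-- First spatial derivative of a function of (space, time). -/
noncomputable def spaceDeriv (f : ℝ → ℝ → ℝ) (x t : ℝ) : ℝ :=
  deriv (fun y => f y t) x

/-- Second spatial derivative of a function of (space, time). -/
noncomputable def spaceDeriv2 (f : ℝ → ℝ → ℝ) (x t : ℝ) : ℝ :=
  deriv (fun y => deriv (fun z => f z t) y) x

open Set Filter Topology

lemma aux_left_deriv_nonneg {u : ℝ → ℝ} {d t0 t1 : ℝ} (ht : t0 < t1)
    (hu : HasDerivAt u d t1) (hmax : ∀ s ∈ Set.Icc t0 t1, u s ≤ u t1) : 0 ≤ d := by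
  have h := (hu.hasDerivWithinAt (s := Set.Iio t1))
  rw [hasDerivWithinAt_iff_tendsto_slope] at h
  have hdiff : Set.Iio t1 \ {t1} = Set.Iio t1 := by
    apply Set.diff_singleton_eq_self; simp
  rw [hdiff] at h
  have hIoo : Set.Ioo t0 t1 ∈ 𝓝[<] t1 := Ioo_mem_nhdsLT_of_mem ⟨ht, le_refl t1⟩
  refine ge_of_tendsto h (Filter.eventually_of_mem hIoo fun y hy => ?_)
  have h1 : u y - u t1 ≤ 0 := sub_nonpos.mpr (hmax y ⟨hy.1.le, hy.2.le⟩)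
  have h2 : y - t1 < 0 := sub_neg.mpr hy.2
  rw [slope_def_field]
  exact div_nonneg_of_nonpos h1 h2.le

lemma aux_second_deriv_nonpos {g : ℝ → ℝ} {x : ℝ} (hg : ContDiff ℝ (⊤ : ℕ∞) g)
    (hmax : IsLocalMax g x) : deriv (deriv g) x ≤ 0 := by
  by_contra hc
  push_neg at hc
  have hg2 : ContDiff ℝ ((⊤ : ℕ∞) : WithTop ℕ∞) g := hg.of_le (by simp)
  have hone : (1 : WithTop ℕ∞) ≤ ((⊤ : ℕ∞) : WithTop ℕ∞) := by
    exact_mod_cast le_top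
  have hg1 : Differentiable ℝ g := hg2.differentiable (ne_of_gt (lt_of_lt_of_le zero_lt_one hone))
  have hg' : ContDiff ℝ ((⊤ : ℕ∞) : WithTop ℕ∞) (deriv g) := (contDiff_infty_iff_deriv.mp hg2).2
  have hd : HasDerivAt (deriv g) (deriv (deriv g) x) x :=
    ((hg'.differentiable (ne_of_gt (lt_of_lt_of_le zero_lt_one hone))) x).hasDerivAt
  have h0 : deriv g x = 0 := hmax.deriv_eq_zero
  rw [hasDerivAt_iff_tendsto_slope] at hd
  have hev : ∀ᶠ y in 𝓝[≠] x, 0 < slope (deriv g) x y :=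
    hd.eventually (eventually_gt_nhds hc)
  have hev2 : ∀ᶠ y in 𝓝[>] x, 0 < deriv g y := by
    have h1 : ∀ᶠ y in 𝓝[>] x, 0 < slope (deriv g) x y :=
      hev.filter_mono (nhdsWithin_mono x (fun y hy => ne_of_gt hy))
    have h2 : ∀ᶠ y in 𝓝[>] x, x < y := self_mem_nhdsWithin
    filter_upwards [h1, h2] with y hy1 hy2
    have hs : slope (deriv g) x y = deriv g y / (y - x) := by
      simp [slope_def_field, h0]
    rw [hs] at hy1
    rcases div_pos_iff.mp hy1 with ⟨h, _⟩ | ⟨_, h⟩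
    · exact h
    · linarith
  obtain ⟨u, hu, hsub⟩ := mem_nhdsGT_iff_exists_Ioc_subset.mp hev2
  have hmono : StrictMonoOn g (Set.Icc x u) :=
    strictMonoOn_of_deriv_pos (convex_Icc x u) hg1.continuous.continuousOn
      (fun y hy => hsub (by rw [interior_Icc] at hy; exact ⟨hy.1, hy.2.le⟩))
  have hloc : ∀ᶠ y in 𝓝[>] x, g y ≤ g x := hmax.filter_mono nhdsWithin_le_nhds
  have hIoc : Set.Ioc x u ∈ 𝓝[>] x := Ioc_mem_nhdsGT_of_mem ⟨le_refl x, hu⟩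
  obtain ⟨y, hy1, hy2⟩ := (hloc.and (Filter.eventually_of_mem hIoc (fun y hy => hy))).exists
  have : g x < g y := hmono ⟨le_refl x, le_of_lt hu⟩ ⟨hy2.1.le, hy2.2⟩ hy2.1
  linarith


/-- Maximum principle for the system `∂ₜfᵢ = (fᵢ''/V - fᵢ'V'/V²)/V - fᵢ𝒯/3` with
`f₁f₂f₃ ≡ 1`, `V > 0`, `𝒯 ≥ 0`: the spatial maxima of the `fᵢ` are non-increasing,
and hence `1/C ≤ fᵢ ≤ C` for some constant `C ≥ 1`. -/
theorem stmt_2 (T0 : ℝ) (hT0 : 0 < T0)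
    (f : Fin 3 → ℝ → ℝ → ℝ) (V 𝒯 : ℝ → ℝ → ℝ)
    (hfsmooth : ∀ i, ContDiff ℝ (⊤ : ℕ∞) (fun p : ℝ × ℝ => f i p.1 p.2))
    (hVsmooth : ContDiff ℝ (⊤ : ℕ∞) (fun p : ℝ × ℝ => V p.1 p.2))
    (hfpos : ∀ i x t, 0 < f i x t) (hVpos : ∀ x t, 0 < V x t)
    (hper : ∀ i x t, f i (x + 2 * π) t = f i x t)
    (hprod : ∀ x t, f 0 x t * f 1 x t * f 2 x t = 1)
    (h𝒯 : ∀ x t, 0 ≤ 𝒯 x t)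
    (hpde : ∀ i x, ∀ t ∈ Set.Ico (0 : ℝ) T0,
      HasDerivAt (fun s => f i x s)
        ((1 / V x t) * (spaceDeriv2 (f i) x t / V x t
            - spaceDeriv (f i) x t * spaceDeriv V x t / (V x t)^2)
          - (1/3) * f i x t * 𝒯 x t) t) :
    (∀ i, AntitoneOn (fun t => ⨆ x : Set.Icc (0 : ℝ) (2 * π), f i x.1 t)
        (Set.Ico (0 : ℝ) T0)) ∧
    ∃ C : ℝ, 1 ≤ C ∧ ∀ i x, ∀ t ∈ Set.Ico (0 : ℝ) T0,
      1 / C ≤ f i x t ∧ f i x t ≤ C := by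
  have two_pi_pos : (0:ℝ) < 2 * π := by positivity
  haveI hnemp : Nonempty ↥(Set.Icc (0:ℝ) (2*π)) := ⟨⟨0, le_refl 0, two_pi_pos.le⟩⟩
  set M : Fin 3 → ℝ → ℝ := fun i t => ⨆ x : Set.Icc (0:ℝ) (2*π), f i x.1 t with hM
  have hcont : ∀ i, Continuous fun p : ℝ × ℝ => f i p.1 p.2 := fun i => (hfsmooth i).continuous
  have hbdd : ∀ i t, BddAbove (Set.range fun x : Set.Icc (0:ℝ) (2*π) => f i x.1 t) := by
    intro i t
    have hc : Continuous fun x : Set.Icc (0:ℝ) (2*π) => f i x.1 t :=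
      (hcont i).comp (continuous_subtype_val.prodMk continuous_const)
    exact (isCompact_range hc).bddAbove
  have hred : ∀ i x t, ∃ y ∈ Set.Icc (0:ℝ) (2*π), f i x t = f i y t := by
    intro i x t
    have hp : Function.Periodic (fun z => f i z t) (2*π) := fun z => hper i z t
    obtain ⟨y, hy, hxy⟩ := hp.exists_mem_Ico₀ two_pi_pos x
    exact ⟨y, Set.Ico_subset_Icc_self hy, hxy⟩
  have hleM : ∀ i t x, x ∈ Set.Icc (0:ℝ) (2*π) → f i x t ≤ M i t := fun i t x hx =>
    le_ciSup (hbdd i t) ⟨x, hx⟩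
  have hleM' : ∀ i t x, f i x t ≤ M i t := by
    intro i t x; obtain ⟨y, hy, hxy⟩ := hred i x t; rw [hxy]; exact hleM i t y hy
  have hMle : ∀ i t c, (∀ x ∈ Set.Icc (0:ℝ) (2*π), f i x t ≤ c) → M i t ≤ c := by
    intro i t c h
    exact ciSup_le fun x => h x.1 x.2
  have key : ∀ i, ∀ t0 t1 ε : ℝ, t0 ∈ Set.Ico 0 T0 → t1 ∈ Set.Ico 0 T0 → t0 < t1 → 0 < ε →
      M i t1 ≤ M i t0 + ε * (t1 - t0) := by
    intro i t0 t1 ε ht0 ht1 h01 hε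
    set K := Set.Icc (0:ℝ) (2*π) ×ˢ Set.Icc t0 t1 with hK
    have hKc : IsCompact K := isCompact_Icc.prod isCompact_Icc
    have hKne : K.Nonempty := ⟨(0, t0), ⟨⟨le_refl 0, two_pi_pos.le⟩, ⟨le_refl t0, h01.le⟩⟩⟩
    have hgc : Continuous fun p : ℝ × ℝ => f i p.1 p.2 - ε * p.2 :=
      (hcont i).sub (continuous_const.mul continuous_snd)
    obtain ⟨⟨x₀, s₀⟩, hmem, hmax⟩ := hKc.exists_isMaxOn hKne hgc.continuousOn
    obtain ⟨hx₀, hs₀⟩ := Set.mem_prod.mp hmem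
    simp only at hx₀ hs₀
    have hmax' : ∀ q ∈ K, f i q.1 q.2 - ε * q.2 ≤ f i x₀ s₀ - ε * s₀ := fun q hq => hmax hq
    rcases eq_or_lt_of_le hs₀.1 with hcase | hcase
    · subst hcase
      apply hMle
      intro x hx
      have h1 := hmax' (x, t1) ⟨hx, ⟨h01.le, le_refl t1⟩⟩
      have h2 : f i x₀ t0 ≤ M i t0 := hleM i t0 x₀ hx₀
      simp only at h1
      linarith
    · exfalso
      have hs₀T : s₀ ∈ Set.Ico (0:ℝ) T0 := ⟨le_trans ht0.1 hs₀.1, lt_of_le_of_lt hs₀.2 ht1.2⟩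
      have hspace : ∀ y : ℝ, f i y s₀ ≤ f i x₀ s₀ := by
        intro y
        obtain ⟨z, hz, hzy⟩ := hred i y s₀
        have h3 := hmax' (z, s₀) ⟨hz, hs₀⟩
        simp only at h3
        rw [hzy]; linarith
      have hmaxloc : IsLocalMax (fun y => f i y s₀) x₀ := Filter.Eventually.of_forall hspace
      have hslice : ContDiff ℝ (⊤ : ℕ∞) (fun y => f i y s₀) :=
        (hfsmooth i).comp (contDiff_id.prodMk contDiff_const)
      have hd1 : spaceDeriv (f i) x₀ s₀ = 0 := hmaxloc.deriv_eq_zero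
      have hd2 : spaceDeriv2 (f i) x₀ s₀ ≤ 0 := aux_second_deriv_nonpos hslice hmaxloc
      set D := (1 / V x₀ s₀) * (spaceDeriv2 (f i) x₀ s₀ / V x₀ s₀
            - spaceDeriv (f i) x₀ s₀ * spaceDeriv V x₀ s₀ / (V x₀ s₀)^2)
          - (1/3) * f i x₀ s₀ * 𝒯 x₀ s₀ with hD
      have hu : HasDerivAt (fun s => f i x₀ s - ε * s) (D - ε) s₀ := by
        have h1 := hpde i x₀ s₀ hs₀T
        have h2 : HasDerivAt (fun s : ℝ => ε * s) ε s₀ := by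
          simpa using (hasDerivAt_id s₀).const_mul ε
        exact h1.sub h2
      have hmaxt : ∀ s ∈ Set.Icc t0 s₀, f i x₀ s - ε * s ≤ f i x₀ s₀ - ε * s₀ := by
        intro s hs
        exact hmax' (x₀, s) ⟨hx₀, ⟨hs.1, le_trans hs.2 hs₀.2⟩⟩
      have hge : 0 ≤ D - ε := aux_left_deriv_nonneg hcase hu hmaxt
      have hDle : D ≤ 0 := by
        have hV := hVpos x₀ s₀
        have h2 : 0 ≤ (1/3) * f i x₀ s₀ * 𝒯 x₀ s₀ := by
          have h4 := (hfpos i x₀ s₀).le; have h5 := h𝒯 x₀ s₀; positivity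
        have h1 : (1 / V x₀ s₀) * (spaceDeriv2 (f i) x₀ s₀ / V x₀ s₀
            - spaceDeriv (f i) x₀ s₀ * spaceDeriv V x₀ s₀ / (V x₀ s₀)^2) ≤ 0 := by
          rw [hd1]
          simp only [zero_mul, zero_div, sub_zero]
          apply mul_nonpos_of_nonneg_of_nonpos (by positivity)
          exact div_nonpos_of_nonpos_of_nonneg hd2 hV.le
        rw [hD]; linarith
      linarith
  have hanti : ∀ i, AntitoneOn (fun t => M i t) (Set.Ico (0:ℝ) T0) := by
    intro i t0 ht0 t1 ht1 h01
    rcases eq_or_lt_of_le h01 with h | h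
    · rw [h]
    · by_contra hcon
      push_neg at hcon
      have hcon' : M i t0 < M i t1 := hcon
      have hd : (0:ℝ) < t1 - t0 := by linarith
      have hδ : 0 < (M i t1 - M i t0) / (2 * (t1 - t0)) := by
        apply div_pos (by linarith) (by linarith)
      have hkey := key i t0 t1 _ ht0 ht1 h hδ
      have heq : (M i t1 - M i t0) / (2 * (t1 - t0)) * (t1 - t0) = (M i t1 - M i t0) / 2 := by
        field_simp
      rw [heq] at hkey
      linarith
  refine ⟨hanti, ?_⟩
  have h0T : (0:ℝ) ∈ Set.Ico (0:ℝ) T0 := ⟨le_refl 0, hT0⟩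
  set B := max (max (M 0 0) (max (M 1 0) (M 2 0))) 1 with hB
  have hB1 : (1:ℝ) ≤ B := le_max_right _ _
  have hBpos : (0:ℝ) < B := lt_of_lt_of_le one_pos hB1
  have hfB : ∀ i x, ∀ t ∈ Set.Ico (0:ℝ) T0, f i x t ≤ B := by
    intro i x t ht
    have h1 : f i x t ≤ M i t := hleM' i t x
    have h2 : M i t ≤ M i 0 := hanti i h0T ht ht.1
    have h3 : M i 0 ≤ B := by
      fin_cases i
      · exact le_max_of_le_left (le_max_left _ _)
      · exact le_max_of_le_left (le_max_of_le_right (le_max_left _ _))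
      · exact le_max_of_le_left (le_max_of_le_right (le_max_right _ _))
    linarith
  refine ⟨B^2, one_le_pow₀ hB1, ?_⟩
  intro i x t ht
  have hub : f i x t ≤ B^2 := by
    have := hfB i x t ht
    nlinarith
  refine ⟨?_, hub⟩
  have hothers : ∃ P, f i x t * P = 1 ∧ 0 < P ∧ P ≤ B^2 := by
    have e0 := hfB 0 x t ht; have e1 := hfB 1 x t ht; have e2 := hfB 2 x t ht
    have p0 := hfpos 0 x t; have p1 := hfpos 1 x t; have p2 := hfpos 2 x t
    fin_cases i
    · exact ⟨f 1 x t * f 2 x t,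
        (show f 0 x t * (f 1 x t * f 2 x t) = 1 by linear_combination hprod x t),
        mul_pos p1 p2, by nlinarith⟩
    · exact ⟨f 0 x t * f 2 x t,
        (show f 1 x t * (f 0 x t * f 2 x t) = 1 by linear_combination hprod x t),
        mul_pos p0 p2, by nlinarith⟩
    · exact ⟨f 0 x t * f 1 x t,
        (show f 2 x t * (f 0 x t * f 1 x t) = 1 by linear_combination hprod x t),
        mul_pos p0 p1, by nlinarith⟩
  obtain ⟨P, hP1, hP2, hP3⟩ := hothers
  have hfi : f i x t = 1 / P := by
    rw [eq_div_iff hP2.ne']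
    linarith [hP1]
  rw [hfi]
  exact one_div_le_one_div_of_le hP2 hP3
end

section
/- Let $f_1, f_2, V : S^1 \times [0,T) \to \mathbb{R}_{>0}$ be $C^2$ functions satisfying the system $\partial_t f_i = \frac{1}{V}\big(\frac{f_i''}{V} - \frac{f_i' V'}{V^2}\big) - \frac{1}{3} f_i \mathcal{T}$ for $i = 1, 2$ and $\partial_t V = \frac{1}{3}\mathcal{T} V$, where $\mathcal{T} = V^{-2}\big\{((\log f_1)')^2 + ((\log f_2)')^2 + ((\log f_1 + \log f_2)')^2\big\}$. Define $f_3 = f_1^{-1} f_2^{-1}$. Then $f_3$ also satisfies $\partial_t f_3 = \frac{1}{V}\big(\frac{f_3''}{V} - \frac{f_3' V'}{V^2}\big) - \frac{1}{3} f_3 \mathcal{T}$. -/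
/-!
Write `ℓ = f'/f` for the logarithmic derivative and `L f = (1/V) ∂ₓ((1/V) ∂ₓ f)`. Then
`L f / f = (ℓ' + ℓ²)/V² - ℓ V'/V³` is linear in `ℓ` apart from the term `ℓ²/V²`. Since
`ℓ₃ = -(ℓ₁ + ℓ₂)`, the linear parts of `L fᵢ / fᵢ` cancel in the sum over `i = 1, 2, 3`, leaving
`(ℓ₁² + ℓ₂² + (ℓ₁ + ℓ₂)²)/V² = 𝒯`. That is exactly what makes
`∂ₜ log f₃ = -∂ₜ log f₁ - ∂ₜ log f₂ = -(L f₁/f₁ + L f₂/f₂) + 2𝒯/3` equal to `L f₃/f₃ - 𝒯/3`.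
-/

open Real

section

variable {𝕜 : Type*} [NontriviallyNormedField 𝕜] {f g p q : 𝕜 → 𝕜} {a b x : 𝕜}

theorem HasDerivAt.inv_mul_inv (hp : HasDerivAt p a x) (hq : HasDerivAt q b x)
    (hp0 : p x ≠ 0) (hq0 : q x ≠ 0) :
    HasDerivAt (fun y => (p y)⁻¹ * (q y)⁻¹)
      (-((p x)⁻¹ * (q x)⁻¹) * (a / p x + b / q x)) x :=
  ((hp.fun_inv hp0).fun_mul (hq.fun_inv hq0)).congr_deriv (by field_simp; ring)

theorem logDeriv_inv_mul_inv (hf : DifferentiableAt 𝕜 f x) (hg : DifferentiableAt 𝕜 g x)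
    (hf0 : f x ≠ 0) (hg0 : g x ≠ 0) :
    logDeriv (fun y => (f y)⁻¹ * (g y)⁻¹) x = -(logDeriv f x + logDeriv g x) := by
  rw [logDeriv_apply, (hf.hasDerivAt.inv_mul_inv hg.hasDerivAt hf0 hg0).deriv,
    logDeriv_apply, logDeriv_apply]
  field_simp

theorem hasDerivAt_logDeriv (hf : DifferentiableAt 𝕜 f x)
    (hf' : DifferentiableAt 𝕜 (deriv f) x) (hf0 : f x ≠ 0) :
    HasDerivAt (logDeriv f) (deriv (deriv f) x / f x - logDeriv f x ^ 2) x :=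
  (hf'.hasDerivAt.div hf.hasDerivAt hf0).congr_deriv (by rw [logDeriv_apply]; field_simp)

theorem deriv_deriv_eq_mul_logDeriv (hf0 : ∀ y, f y ≠ 0) (hf : DifferentiableAt 𝕜 f x)
    {ℓ' : 𝕜} (hℓ : HasDerivAt (logDeriv f) ℓ' x) :
    deriv (deriv f) x = f x * (logDeriv f x ^ 2 + ℓ') := by
  have hderiv : deriv f = f * logDeriv f := by
    ext y
    rw [Pi.mul_apply, logDeriv_apply]
    field_simp [hf0 y]
  rw [hderiv, deriv_mul hf hℓ.differentiableAt, hℓ.deriv, congrFun hderiv x, Pi.mul_apply]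
  ring

theorem deriv_deriv_inv_mul_inv (hf : ContDiff 𝕜 2 f) (hg : ContDiff 𝕜 2 g)
    (hf0 : ∀ y, f y ≠ 0) (hg0 : ∀ y, g y ≠ 0) (x : 𝕜) :
    deriv (deriv fun y => (f y)⁻¹ * (g y)⁻¹) x =
      (f x)⁻¹ * (g x)⁻¹ * ((logDeriv f x + logDeriv g x) ^ 2 + logDeriv f x ^ 2
        + logDeriv g x ^ 2 - deriv (deriv f) x / f x - deriv (deriv g) x / g x) := by
  have hf1 := hf.differentiable two_ne_zero
  have hg1 := hg.differentiable two_ne_zero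
  have hlog : logDeriv (fun y => (f y)⁻¹ * (g y)⁻¹) = fun y => -(logDeriv f y + logDeriv g y) :=
    funext fun y => logDeriv_inv_mul_inv (hf1 y) (hg1 y) (hf0 y) (hg0 y)
  have hℓ : HasDerivAt (logDeriv fun y => (f y)⁻¹ * (g y)⁻¹)
      (-((deriv (deriv f) x / f x - logDeriv f x ^ 2)
        + (deriv (deriv g) x / g x - logDeriv g x ^ 2))) x := by
    rw [hlog]
    exact ((hasDerivAt_logDeriv (hf1 x) (hf.differentiable_deriv_two x) (hf0 x)).add
      (hasDerivAt_logDeriv (hg1 x) (hg.differentiable_deriv_two x) (hg0 x))).neg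
  rw [deriv_deriv_eq_mul_logDeriv (fun y => mul_ne_zero (inv_ne_zero (hf0 y))
    (inv_ne_zero (hg0 y))) ((hf1 x).inv (hf0 x) |>.mul ((hg1 x).inv (hg0 x))) hℓ, hlog]
  ring

/-- `(1/v) ∂ₓ((1/v) ∂ₓ f)` written out, i.e. the second derivative of `f` in the arclength
`ds = v dx`. -/
noncomputable def arcLengthLaplacian (v f : 𝕜 → 𝕜) (x : 𝕜) : 𝕜 :=
  1 / v x * (deriv (deriv f) x / v x - deriv f x * deriv v x / v x ^ 2)

theorem arcLengthLaplacian_inv_mul_inv (v : 𝕜 → 𝕜) (hf : ContDiff 𝕜 2 f) (hg : ContDiff 𝕜 2 g)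
    (hf0 : ∀ y, f y ≠ 0) (hg0 : ∀ y, g y ≠ 0) (x : 𝕜) :
    arcLengthLaplacian v (fun y => (f y)⁻¹ * (g y)⁻¹) x
      + (f x)⁻¹ * (g x)⁻¹ * (arcLengthLaplacian v f x / f x + arcLengthLaplacian v g x / g x)
      = (f x)⁻¹ * (g x)⁻¹ * (1 / v x ^ 2 * (logDeriv f x ^ 2 + logDeriv g x ^ 2
          + (logDeriv f x + logDeriv g x) ^ 2)) := by
  have hderiv := ((hf.differentiable two_ne_zero x).hasDerivAt.inv_mul_inv
    (hg.differentiable two_ne_zero x).hasDerivAt (hf0 x) (hg0 x)).deriv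
  simp only [arcLengthLaplacian, deriv_deriv_inv_mul_inv hf hg hf0 hg0, hderiv, logDeriv_apply]
  ring

theorem HasDerivAt.inv_mul_inv_of_eq_sub [CharZero 𝕜] {p q : 𝕜 → 𝕜} {Lp Lq Lh T t : 𝕜}
    (hp : HasDerivAt p (Lp - 1 / 3 * p t * T) t) (hq : HasDerivAt q (Lq - 1 / 3 * q t * T) t)
    (hp0 : p t ≠ 0) (hq0 : q t ≠ 0)
    (hL : Lh + (p t)⁻¹ * (q t)⁻¹ * (Lp / p t + Lq / q t) = (p t)⁻¹ * (q t)⁻¹ * T) :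
    HasDerivAt (fun s => (p s)⁻¹ * (q s)⁻¹) (Lh - 1 / 3 * ((p t)⁻¹ * (q t)⁻¹) * T) t :=
  (hp.inv_mul_inv hq hp0 hq0).congr_deriv (by rw [eq_sub_of_add_eq hL]; field_simp; ring)

end

theorem stmt_10_general (T0 : ℝ) (f1 f2 V 𝒯 f3 : ℝ → ℝ → ℝ)
    (hf1smooth : ContDiff ℝ 2 (fun p : ℝ × ℝ => f1 p.1 p.2))
    (hf2smooth : ContDiff ℝ 2 (fun p : ℝ × ℝ => f2 p.1 p.2))
    (hf1pos : ∀ x t, 0 < f1 x t) (hf2pos : ∀ x t, 0 < f2 x t)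
    (h𝒯 : 𝒯 = fun x t => (1 / (V x t)^2) *
      ((deriv (fun y => Real.log (f1 y t)) x)^2 +
       (deriv (fun y => Real.log (f2 y t)) x)^2 +
       (deriv (fun y => Real.log (f1 y t) + Real.log (f2 y t)) x)^2))
    (hpde1 : ∀ x, ∀ t ∈ Set.Ico (0 : ℝ) T0,
      HasDerivAt (fun s => f1 x s)
        ((1 / V x t) * (deriv (fun y => deriv (fun z => f1 z t) y) x / V x t
            - deriv (fun y => f1 y t) x * deriv (fun y => V y t) x / (V x t)^2)
          - (1/3) * f1 x t * 𝒯 x t) t)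
    (hpde2 : ∀ x, ∀ t ∈ Set.Ico (0 : ℝ) T0,
      HasDerivAt (fun s => f2 x s)
        ((1 / V x t) * (deriv (fun y => deriv (fun z => f2 z t) y) x / V x t
            - deriv (fun y => f2 y t) x * deriv (fun y => V y t) x / (V x t)^2)
          - (1/3) * f2 x t * 𝒯 x t) t)
    (hf3 : f3 = fun x t => (f1 x t)⁻¹ * (f2 x t)⁻¹) :
    ∀ x, ∀ t ∈ Set.Ico (0 : ℝ) T0,
      HasDerivAt (fun s => f3 x s)
        ((1 / V x t) * (deriv (fun y => deriv (fun z => f3 z t) y) x / V x t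
            - deriv (fun y => f3 y t) x * deriv (fun y => V y t) x / (V x t)^2)
          - (1/3) * f3 x t * 𝒯 x t) t := by
  intro x t ht
  subst hf3 h𝒯
  have hslice {F : ℝ → ℝ → ℝ} (hF : ContDiff ℝ 2 fun p : ℝ × ℝ => F p.1 p.2) :
      ContDiff ℝ 2 fun y => F y t :=
    hF.comp (contDiff_id.prodMk contDiff_const)
  have hf1 := hslice hf1smooth
  have hf2 := hslice hf2smooth
  have hf10 y : f1 y t ≠ 0 := (hf1pos y t).ne'
  have hf20 y : f2 y t ≠ 0 := (hf2pos y t).ne'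
  have hlog1 := (hf1.differentiable two_ne_zero x).hasDerivAt.log (hf10 x)
  have hlog2 := (hf2.differentiable two_ne_zero x).hasDerivAt.log (hf20 x)
  refine (hpde1 x t ht).inv_mul_inv_of_eq_sub (hpde2 x t ht) (hf10 x) (hf20 x) ?_
  beta_reduce
  rw [hlog1.deriv, hlog2.deriv, (hlog1.fun_add hlog2).deriv]
  exact arcLengthLaplacian_inv_mul_inv (fun y => V y t) hf1 hf2 hf10 hf20 x

/-- If `f₁, f₂, V > 0` solve the reduced system
`∂ₜfᵢ = (fᵢ''/V - fᵢ'V'/V²)/V - fᵢ𝒯/3` (`i = 1,2`), `∂ₜV = 𝒯V/3`, with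
`𝒯 = V⁻²{((log f₁)')² + ((log f₂)')² + ((log f₁ + log f₂)')²}`, then
`f₃ = f₁⁻¹f₂⁻¹` satisfies the same equation `∂ₜf₃ = (f₃''/V - f₃'V'/V²)/V - f₃𝒯/3`. -/
theorem stmt_10 (T0 : ℝ) (hT0 : 0 < T0) (f1 f2 V 𝒯 f3 : ℝ → ℝ → ℝ)
    (hf1smooth : ContDiff ℝ 2 (fun p : ℝ × ℝ => f1 p.1 p.2))
    (hf2smooth : ContDiff ℝ 2 (fun p : ℝ × ℝ => f2 p.1 p.2))
    (hVsmooth : ContDiff ℝ 2 (fun p : ℝ × ℝ => V p.1 p.2))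
    (hf1pos : ∀ x t, 0 < f1 x t) (hf2pos : ∀ x t, 0 < f2 x t)
    (hVpos : ∀ x t, 0 < V x t)
    (hper1 : ∀ x t, f1 (x + 2 * π) t = f1 x t)
    (hper2 : ∀ x t, f2 (x + 2 * π) t = f2 x t)
    (hperV : ∀ x t, V (x + 2 * π) t = V x t)
    (h𝒯 : 𝒯 = fun x t => (1 / (V x t)^2) *
      ((deriv (fun y => Real.log (f1 y t)) x)^2 +
       (deriv (fun y => Real.log (f2 y t)) x)^2 +
       (deriv (fun y => Real.log (f1 y t) + Real.log (f2 y t)) x)^2))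
    (hpde1 : ∀ x, ∀ t ∈ Set.Ico (0 : ℝ) T0,
      HasDerivAt (fun s => f1 x s)
        ((1 / V x t) * (deriv (fun y => deriv (fun z => f1 z t) y) x / V x t
            - deriv (fun y => f1 y t) x * deriv (fun y => V y t) x / (V x t)^2)
          - (1/3) * f1 x t * 𝒯 x t) t)
    (hpde2 : ∀ x, ∀ t ∈ Set.Ico (0 : ℝ) T0,
      HasDerivAt (fun s => f2 x s)
        ((1 / V x t) * (deriv (fun y => deriv (fun z => f2 z t) y) x / V x t
            - deriv (fun y => f2 y t) x * deriv (fun y => V y t) x / (V x t)^2)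
          - (1/3) * f2 x t * 𝒯 x t) t)
    (hpdeV : ∀ x, ∀ t ∈ Set.Ico (0 : ℝ) T0,
      HasDerivAt (fun s => V x s) ((1/3) * 𝒯 x t * V x t) t)
    (hf3 : f3 = fun x t => (f1 x t)⁻¹ * (f2 x t)⁻¹) :
    ∀ x, ∀ t ∈ Set.Ico (0 : ℝ) T0,
      HasDerivAt (fun s => f3 x s)
        ((1 / V x t) * (deriv (fun y => deriv (fun z => f3 z t) y) x / V x t
            - deriv (fun y => f3 y t) x * deriv (fun y => V y t) x / (V x t)^2)
          - (1/3) * f3 x t * 𝒯 x t) t :=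
  stmt_10_general T0 f1 f2 V 𝒯 f3 hf1smooth hf2smooth hf1pos hf2pos h𝒯 hpde1 hpde2 hf3
end

section
/- Let $A_i : S^1 \times [0,T) \to \mathbb{R}_{>0}$, $i=1,2,3$, be smooth solutions of $\partial_t A_i = \big((\log \frac{A_i}{V})'\frac{A_i}{V^2}\big)'$ with $V = (A_1A_2A_3)^{1/3}$. Then $V$ satisfies $\partial_t V = \frac{1}{3}\mathcal{T}V$, where $\mathcal{T} = V^{-2}\sum_{i=1}^3 \big((\log(A_i/V))'\big)^2 \geq 0$. In particular $\partial_t V \geq 0$, so $V$ is pointwise non-decreasing in $t$. -/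
open Real

set_option maxHeartbeats 2000000 in
/-- Along the hypersymplectic flow of simple type `∂ₜAᵢ = ((log(Aᵢ/V))' Aᵢ/V²)'`,
the factor `V = (A₁A₂A₃)^{1/3}` evolves by `∂ₜV = 𝒯V/3` with
`𝒯 = V⁻² Σᵢ ((log(Aᵢ/V))')² ≥ 0`; in particular `V` is pointwise non-decreasing. -/
theorem stmt_13 (T0 : ℝ) (hT0 : 0 < T0) (A : Fin 3 → ℝ → ℝ → ℝ)
    (hAsmooth : ∀ i, ContDiff ℝ (⊤ : ℕ∞) (fun p : ℝ × ℝ => A i p.1 p.2))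
    (hApos : ∀ i x t, 0 < A i x t)
    (hper : ∀ i x t, A i (x + 2 * π) t = A i x t)
    (V 𝒯 : ℝ → ℝ → ℝ)
    (hV : V = fun x t => (A 0 x t * A 1 x t * A 2 x t) ^ ((1 : ℝ) / 3))
    (h𝒯 : 𝒯 = fun x t => (1 / (V x t)^2) *
      ∑ i, (deriv (fun y => Real.log (A i y t / V y t)) x)^2)
    (hpde : ∀ i x, ∀ t ∈ Set.Ico (0 : ℝ) T0,
      HasDerivAt (fun s => A i x s)
        (deriv (fun y =>
          deriv (fun z => Real.log (A i z t / V z t)) y * (A i y t / (V y t)^2)) x) t) :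
    (∀ x, ∀ t ∈ Set.Ico (0 : ℝ) T0,
      HasDerivAt (fun s => V x s) ((1/3) * 𝒯 x t * V x t) t ∧
      0 ≤ (1/3) * 𝒯 x t * V x t) ∧
    ∀ x, MonotoneOn (fun t => V x t) (Set.Ico (0 : ℝ) T0) := by
  subst hV h𝒯
  beta_reduce at hpde
  -- smoothness in x at any fixed time
  have ca : ∀ (i : Fin 3) (t : ℝ), ContDiff ℝ (⊤ : ℕ∞) (fun y => A i y t) := by
    intro i t
    exact ((hAsmooth i).of_le (by simp)).comp (contDiff_id.prodMk contDiff_const)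
  have hd : ∀ (i : Fin 3) (t : ℝ), Differentiable ℝ (fun y => A i y t) :=
    fun i t => (contDiff_infty_iff_deriv.mp (ca i t)).1
  have hdb : ∀ (i : Fin 3) (t : ℝ), Differentiable ℝ (deriv (fun y => A i y t)) :=
    fun i t => (contDiff_infty_iff_deriv.mp
      (contDiff_infty_iff_deriv.mp (ca i t)).2).1
  have key : ∀ x, ∀ t ∈ Set.Ico (0:ℝ) T0,
      HasDerivAt (fun s => (A 0 x s * A 1 x s * A 2 x s) ^ ((1:ℝ)/3))
        ((1/3) * ((1 / (((A 0 x t * A 1 x t * A 2 x t) ^ ((1:ℝ)/3)))^2) *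
          ∑ i, (deriv (fun y => Real.log (A i y t /
            ((A 0 y t * A 1 y t * A 2 y t) ^ ((1:ℝ)/3)))) x)^2) *
          ((A 0 x t * A 1 x t * A 2 x t) ^ ((1:ℝ)/3))) t := by
    intro x t ht
    have pa : ∀ (i : Fin 3) y, (0:ℝ) < A i y t := fun i y => hApos i y t
    have hPpos : ∀ y, (0:ℝ) < A 0 y t * A 1 y t * A 2 y t := fun y => by
      have := pa 0 y; have := pa 1 y; have := pa 2 y; positivity
    have hVpos : ∀ y, (0:ℝ) < (A 0 y t * A 1 y t * A 2 y t) ^ ((1:ℝ)/3) :=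
      fun y => Real.rpow_pos_of_pos (hPpos y) _
    -- the log function rewritten
    have hlogfun : ∀ (i : Fin 3), (fun z => Real.log (A i z t / ((A 0 z t * A 1 z t * A 2 z t) ^ ((1:ℝ)/3))))
        = fun z => Real.log (A i z t) - (1/3) * (Real.log (A 0 z t) + Real.log (A 1 z t) + Real.log (A 2 z t)) := by
      intro i; funext z
      rw [Real.log_div (pa i z).ne' (hVpos z).ne', Real.log_rpow (hPpos z),
        Real.log_mul (mul_pos (pa 0 z) (pa 1 z)).ne' (pa 2 z).ne',
        Real.log_mul (pa 0 z).ne' (pa 1 z).ne']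
    have hlog : ∀ (i : Fin 3) y, HasDerivAt
        (fun z => Real.log (A i z t / ((A 0 z t * A 1 z t * A 2 z t) ^ ((1:ℝ)/3))))
        (deriv (fun y => A i y t) y / A i y t - (1/3) * (deriv (fun y => A 0 y t) y / A 0 y t
          + deriv (fun y => A 1 y t) y / A 1 y t + deriv (fun y => A 2 y t) y / A 2 y t)) y := by
      intro i y
      rw [hlogfun i]
      exact ((hd i t y).hasDerivAt.log (pa i y).ne').sub
        (((((hd 0 t y).hasDerivAt.log (pa 0 y).ne').add ((hd 1 t y).hasDerivAt.log (pa 1 y).ne')).add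
          ((hd 2 t y).hasDerivAt.log (pa 2 y).ne')).const_mul _)
    have hlogd : ∀ (i : Fin 3) y, deriv
        (fun z => Real.log (A i z t / ((A 0 z t * A 1 z t * A 2 z t) ^ ((1:ℝ)/3)))) y
        = deriv (fun y => A i y t) y / A i y t - (1/3) * (deriv (fun y => A 0 y t) y / A 0 y t
          + deriv (fun y => A 1 y t) y / A 1 y t + deriv (fun y => A 2 y t) y / A 2 y t) :=
      fun i y => (hlog i y).deriv
    -- pieces at x
    have hq : ∀ i : Fin 3, HasDerivAt (fun y => A i y t) (deriv (fun y => A i y t) x) x :=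
      fun i => (hd i t x).hasDerivAt
    have hr : ∀ i : Fin 3, HasDerivAt (deriv (fun y => A i y t)) (deriv (deriv (fun y => A i y t)) x) x :=
      fun i => (hdb i t x).hasDerivAt
    have hg : ∀ i : Fin 3, HasDerivAt (fun y => deriv (fun y => A i y t) y / A i y t
        - (1/3) * (deriv (fun y => A 0 y t) y / A 0 y t + deriv (fun y => A 1 y t) y / A 1 y t
          + deriv (fun y => A 2 y t) y / A 2 y t))
        ((deriv (deriv (fun y => A i y t)) x * A i x t - deriv (fun y => A i y t) x * deriv (fun y => A i y t) x) / (A i x t)^2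
          - (1/3) * ((deriv (deriv (fun y => A 0 y t)) x * A 0 x t - deriv (fun y => A 0 y t) x * deriv (fun y => A 0 y t) x) / (A 0 x t)^2
            + (deriv (deriv (fun y => A 1 y t)) x * A 1 x t - deriv (fun y => A 1 y t) x * deriv (fun y => A 1 y t) x) / (A 1 x t)^2
            + (deriv (deriv (fun y => A 2 y t)) x * A 2 x t - deriv (fun y => A 2 y t) x * deriv (fun y => A 2 y t) x) / (A 2 x t)^2)) x :=
      fun i => ((hr i).div (hq i) (pa i x).ne').sub
        (((((hr 0).div (hq 0) (pa 0 x).ne').add ((hr 1).div (hq 1) (pa 1 x).ne')).add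
          ((hr 2).div (hq 2) (pa 2 x).ne')).const_mul _)
    have hVder := HasDerivAt.rpow_const (p := (1:ℝ)/3) (((hq 0).mul (hq 1)).mul (hq 2))
      (Or.inl (hPpos x).ne')
    have hV2 := hVder.pow 2
    have hquot := fun i : Fin 3 => (hq i).div hV2 (pow_ne_zero 2 (hVpos x).ne')
    have hF := fun i : Fin 3 => (hg i).mul (hquot i)
    simp only [Pi.mul_def, Pi.div_def, Pi.pow_def] at hF
    have hEq : ∀ i : Fin 3, (fun y => deriv (fun z => Real.log (A i z t / ((A 0 z t * A 1 z t * A 2 z t) ^ ((1:ℝ)/3)))) y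
        * (A i y t / (((A 0 y t * A 1 y t * A 2 y t) ^ ((1:ℝ)/3)))^2))
        = (fun y => (deriv (fun y => A i y t) y / A i y t - (1/3) * (deriv (fun y => A 0 y t) y / A 0 y t
            + deriv (fun y => A 1 y t) y / A 1 y t + deriv (fun y => A 2 y t) y / A 2 y t))
          * (A i y t / ((A 0 y t * A 1 y t * A 2 y t) ^ ((1:ℝ)/3))^2)) :=
      fun i => funext fun y => by rw [hlogd i y]
    have hA0 := hpde 0 x t ht
    rw [hEq 0, (hF 0).deriv] at hA0
    have hA1 := hpde 1 x t ht
    rw [hEq 1, (hF 1).deriv] at hA1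
    have hA2 := hpde 2 x t ht
    rw [hEq 2, (hF 2).deriv] at hA2
    have hprod := HasDerivAt.rpow_const (p := (1:ℝ)/3) ((hA0.mul hA1).mul hA2) (Or.inl (hPpos x).ne')
    simp only [Pi.mul_def] at hprod
    convert hprod using 1
    simp only [Fin.sum_univ_three, hlogd, pow_one]
    rw [show ((A 0 x t * A 1 x t * A 2 x t):ℝ) ^ ((1:ℝ)/3 - 1)
        = (A 0 x t * A 1 x t * A 2 x t) ^ ((1:ℝ)/3) / (A 0 x t * A 1 x t * A 2 x t) from by
      rw [Real.rpow_sub (hPpos x), Real.rpow_one]]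
    have hvne := (hVpos x).ne'
    have hp0 := (pa 0 x).ne'
    have hp1 := (pa 1 x).ne'
    have hp2 := (pa 2 x).ne'
    generalize (A 0 x t * A 1 x t * A 2 x t : ℝ) ^ ((1:ℝ)/3) = v at hvne ⊢
    generalize deriv (deriv fun y => A 0 y t) x = r0
    generalize deriv (deriv fun y => A 1 y t) x = r1
    generalize deriv (deriv fun y => A 2 y t) x = r2
    generalize deriv (fun y => A 0 y t) x = q0
    generalize deriv (fun y => A 1 y t) x = q1
    generalize deriv (fun y => A 2 y t) x = q2
    generalize A 0 x t = p0 at hp0 ⊢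
    generalize A 1 x t = p1 at hp1 ⊢
    generalize A 2 x t = p2 at hp2 ⊢
    field_simp
    ring
  constructor
  · intro x t ht
    refine ⟨key x t ht, ?_⟩
    have h1 : (0:ℝ) ≤ (1 / (((A 0 x t * A 1 x t * A 2 x t) ^ ((1:ℝ)/3)))^2) *
        ∑ i, (deriv (fun y => Real.log (A i y t /
          ((A 0 y t * A 1 y t * A 2 y t) ^ ((1:ℝ)/3)))) x)^2 := by
      apply mul_nonneg (by positivity)
      exact Finset.sum_nonneg fun i _ => sq_nonneg _
    have h2 : (0:ℝ) < (A 0 x t * A 1 x t * A 2 x t) ^ ((1:ℝ)/3) := by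
      have := hApos 0 x t; have := hApos 1 x t; have := hApos 2 x t; positivity
    positivity
  · intro x
    apply monotoneOn_of_deriv_nonneg (convex_Ico _ _)
    · intro t ht
      exact (key x t ht).continuousAt.continuousWithinAt
    · rw [interior_Ico]
      intro t ht
      exact (key x t (Set.mem_Ico.mpr ⟨le_of_lt ht.1, ht.2⟩)).differentiableAt.differentiableWithinAt
    · rw [interior_Ico]
      intro t ht
      have ht' : t ∈ Set.Ico (0:ℝ) T0 := ⟨le_of_lt ht.1, ht.2⟩
      rw [(key x t ht').deriv]
      have h1 : (0:ℝ) ≤ (1 / (((A 0 x t * A 1 x t * A 2 x t) ^ ((1:ℝ)/3)))^2) *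
          ∑ i, (deriv (fun y => Real.log (A i y t /
            ((A 0 y t * A 1 y t * A 2 y t) ^ ((1:ℝ)/3)))) x)^2 := by
        apply mul_nonneg (by positivity)
        exact Finset.sum_nonneg fun i _ => sq_nonneg _
      have h2 : (0:ℝ) < (A 0 x t * A 1 x t * A 2 x t) ^ ((1:ℝ)/3) := by
        have := hApos 0 x t; have := hApos 1 x t; have := hApos 2 x t; positivity
      positivity
end
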